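/- For every η with 0.99 ≤ η < 1, the standard normal quantile function satisfies Φ⁻¹(η) = √(2 log(1/(1−η))) − r(η), where the remainder r(η) = √(2 log(1/(1−η))) − Φ⁻¹(η) lies in the interval [0, 1.5]. Equivalently: √(2 log(1/(1−η))) − 1.5 ≤ Φ⁻¹(η) ≤ √(2 log(1/(1−η))) for all η ∈ [0.99, 1). -/

import Mathlib

open MeasureTheory ProbabilityTheory Set

open Real Filter Topology

/-- The standard normal cumulative distribution function Φ. -/
noncomputable def stdNormalCDF (t : ℝ) : ℝ := ((gaussianReal 0 1) (Iic t)).toReal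

lemma f_eq (x : ℝ) : gaussianPDFReal 0 1 x = (Real.sqrt (2*π))⁻¹ * Real.exp (-x^2/2) := by
  simp [gaussianPDFReal]

lemma f_pos (x : ℝ) : 0 < gaussianPDFReal 0 1 x := gaussianPDFReal_pos 0 1 x one_ne_zero

lemma f_int : Integrable (gaussianPDFReal 0 1) := integrable_gaussianPDFReal 0 1

lemma cdf_int (t : ℝ) : stdNormalCDF t = ∫ x in Iic t, gaussianPDFReal 0 1 x := by
  rw [stdNormalCDF, gaussianReal_apply_eq_integral 0 one_ne_zero,
    ENNReal.toReal_ofReal (setIntegral_nonneg measurableSet_Iic fun x _ => (f_pos x).le)]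

lemma cdf_cont : Continuous stdNormalCDF := by
  have h : stdNormalCDF = fun t => stdNormalCDF 0 + ∫ x in (0:ℝ)..t, gaussianPDFReal 0 1 x := by
    funext t
    rw [cdf_int, cdf_int, ← intervalIntegral.integral_Iic_sub_Iic f_int.integrableOn f_int.integrableOn]
    ring
  rw [h]
  exact continuous_const.add
    (intervalIntegral.continuous_primitive (fun a b => f_int.intervalIntegrable) 0)

lemma cdf_mono : StrictMono stdNormalCDF := by
  intro a b hab
  have h1 : stdNormalCDF b - stdNormalCDF a = ∫ x in a..b, gaussianPDFReal 0 1 x := by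
    rw [cdf_int, cdf_int, intervalIntegral.integral_Iic_sub_Iic f_int.integrableOn f_int.integrableOn]
  have h2 : 0 < ∫ x in a..b, gaussianPDFReal 0 1 x :=
    intervalIntegral.intervalIntegral_pos_of_pos_on f_int.intervalIntegrable
      (fun x _ => f_pos x) hab
  linarith

lemma cdf_compl (s : ℝ) : 1 - stdNormalCDF s = ∫ x in Ioi s, gaussianPDFReal 0 1 x := by
  have h := intervalIntegral.integral_Iic_add_Ioi (b := s) f_int.integrableOn f_int.integrableOn
  rw [integral_gaussianPDFReal_eq_one 0 one_ne_zero] at h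
  rw [cdf_int]; linarith

lemma exists_cdf_eq {η : ℝ} (h0 : 0 < η) (h1 : η < 1) : ∃ x, stdNormalCDF x = η := by
  have hcdf : ∀ x, cdf (gaussianReal 0 1) x = stdNormalCDF x := fun x =>
    cdf_eq_real (gaussianReal 0 1) x
  have ha : ∃ a, stdNormalCDF a < η := by
    obtain ⟨a, ha⟩ := ((tendsto_cdf_atBot (gaussianReal 0 1)).eventually_lt_const h0).exists
    exact ⟨a, by rwa [hcdf] at ha⟩
  have hb : ∃ b, η < stdNormalCDF b := by
    obtain ⟨b, hb⟩ := ((tendsto_cdf_atTop (gaussianReal 0 1)).eventually_const_lt h1).exists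
    exact ⟨b, by rwa [hcdf] at hb⟩
  obtain ⟨a, ha⟩ := ha
  obtain ⟨b, hb⟩ := hb
  have hsub := intermediate_value_Icc (le_max_left a b) cdf_cont.continuousOn
  have : η ∈ Icc (stdNormalCDF a) (stdNormalCDF (max a b)) :=
    ⟨ha.le, hb.le.trans (cdf_mono.monotone (le_max_right a b))⟩
  obtain ⟨x, _, hx⟩ := hsub this
  exact ⟨x, hx⟩

lemma g_int : Integrable (fun x : ℝ => x * Real.exp (-x^2/2)) := by
  have h := integrable_rpow_mul_exp_neg_mul_sq (b := 1/2) (by norm_num) (s := 1) (by norm_num)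
  have he : (fun x : ℝ => x ^ (1:ℝ) * Real.exp (-(1/2) * x^2))
      = fun x : ℝ => x * Real.exp (-x^2/2) := by
    funext x; rw [Real.rpow_one]; congr 1; ring
  rwa [he] at h

lemma g_integral {t : ℝ} :
    ∫ x in Ioi t, x * Real.exp (-x^2/2) = Real.exp (-t^2/2) := by
  have hderiv : ∀ x ∈ Ici t, HasDerivAt (fun x : ℝ => -Real.exp (-x^2/2))
      (x * Real.exp (-x^2/2)) x := by
    intro x _
    have h1 : HasDerivAt (fun x : ℝ => -x^2/2) (-x) x := by
      have h0 := ((hasDerivAt_pow 2 x).div_const 2).fun_neg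
      norm_num at h0
      simpa [neg_div] using h0
    have := (h1.exp).fun_neg
    rw [show x * Real.exp (-x^2/2) = -(Real.exp (-x^2/2) * -x) by ring]
    exact this
  have htend : Tendsto (fun x : ℝ => -Real.exp (-x^2/2)) atTop (𝓝 0) := by
    have h1 : Tendsto (fun x : ℝ => -x^2/2) atTop atBot := by
      apply Filter.Tendsto.atBot_div_const (by norm_num : (0:ℝ) < 2)
      exact tendsto_neg_atBot_iff.mpr (tendsto_pow_atTop two_ne_zero)
    have := (Real.tendsto_exp_atBot.comp h1).neg
    simpa using this
  have := integral_Ioi_of_hasDerivAt_of_tendsto' hderiv g_int.integrableOn htend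
  rw [this]; ring

lemma tail_ub {t : ℝ} (ht : 1 ≤ t) : 1 - stdNormalCDF t ≤ Real.exp (-t^2/2) := by
  rw [cdf_compl]
  have ht0 : 0 < t := by linarith
  have hC0 : (0:ℝ) ≤ (Real.sqrt (2*π))⁻¹ := by positivity
  have hC1 : (Real.sqrt (2*π))⁻¹ ≤ 1 := by
    rw [inv_le_one_iff₀]
    right
    rw [show (1:ℝ) = Real.sqrt 1 by simp]
    exact Real.sqrt_le_sqrt (by nlinarith [Real.pi_gt_three])
  have cmp : ∫ x in Ioi t, gaussianPDFReal 0 1 x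
      ≤ ∫ x in Ioi t, t⁻¹ * (Real.sqrt (2*π))⁻¹ * (x * Real.exp (-x^2/2)) := by
    apply setIntegral_mono_on f_int.integrableOn
      ((g_int.const_mul _).integrableOn) measurableSet_Ioi
    intro x hx
    rw [f_eq]
    have hx1 : 1 ≤ t⁻¹ * x := by
      rw [← inv_mul_cancel₀ (ne_of_gt ht0)]
      exact mul_le_mul_of_nonneg_left (le_of_lt hx) (by positivity)
    have hE : (0:ℝ) < Real.exp (-x^2/2) := Real.exp_pos _
    nlinarith [mul_le_mul_of_nonneg_left hx1 (mul_nonneg hC0 hE.le)]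
  have hval : ∫ x in Ioi t, t⁻¹ * (Real.sqrt (2*π))⁻¹ * (x * Real.exp (-x^2/2))
      = t⁻¹ * (Real.sqrt (2*π))⁻¹ * Real.exp (-t^2/2) := by
    rw [MeasureTheory.integral_const_mul, g_integral]
  have ht1 : t⁻¹ ≤ 1 := by
    rw [inv_le_one_iff₀]; right; exact ht
  have ht1' : (0:ℝ) ≤ t⁻¹ := by positivity
  have hE : (0:ℝ) < Real.exp (-t^2/2) := Real.exp_pos _
  nlinarith [cmp, hval, mul_le_mul_of_nonneg_right (mul_le_mul ht1 hC1 hC0 zero_le_one) hE.le]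

lemma tail_lb {t : ℝ} (ht : 2.25 ≤ t) :
    Real.exp (-t^2/2) ≤ 1 - stdNormalCDF (t - 1.5) := by
  rw [cdf_compl]
  have hsub : ∫ x in Ioc (t-1.5) (t-0.5), gaussianPDFReal 0 1 x
      ≤ ∫ x in Ioi (t-1.5), gaussianPDFReal 0 1 x := by
    apply setIntegral_mono_set f_int.integrableOn
      (ae_of_all _ fun x => (f_pos x).le)
    exact HasSubset.Subset.eventuallyLE Ioc_subset_Ioi_self
  have hconst : gaussianPDFReal 0 1 (t-0.5) * (volume (Ioc (t-1.5) (t-0.5))).toReal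
      ≤ ∫ x in Ioc (t-1.5) (t-0.5), gaussianPDFReal 0 1 x := by
    apply setIntegral_ge_of_const_le_real measurableSet_Ioc (by simp)
    · intro x hx
      rw [f_eq, f_eq]
      apply mul_le_mul_of_nonneg_left _ (by positivity)
      apply Real.exp_le_exp.2
      have hx0 : (0:ℝ) ≤ x := by have := hx.1; linarith
      have : x^2 ≤ (t-0.5)^2 := by nlinarith [hx.2]
      linarith
    · exact f_int.integrableOn
  have hvol : (volume (Ioc (t-1.5) (t-0.5))).toReal = 1 := by
    rw [Real.volume_Ioc, ENNReal.toReal_ofReal (by norm_num)]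
    norm_num
  have hbase : Real.exp (-t^2/2) ≤ gaussianPDFReal 0 1 (t-0.5) := by
    rw [f_eq]
    have harg : -(t-(0.5:ℝ))^2/2 = (t - 0.25)/2 + (-t^2/2) := by ring
    rw [harg, Real.exp_add]
    have hS : Real.sqrt (2*π) ≤ 2.51 := by
      rw [show (2.51:ℝ) = Real.sqrt (2.51^2) by rw [Real.sqrt_sq] <;> norm_num]
      exact Real.sqrt_le_sqrt (by nlinarith [Real.pi_lt_d2])
    have hS0 : (0:ℝ) < Real.sqrt (2*π) := Real.sqrt_pos.2 (by positivity)
    have hA : (2.51:ℝ) ≤ Real.exp ((t - 0.25)/2) := by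
      have h1 : (1:ℝ) ≤ (t - 0.25)/2 := by linarith
      have := Real.exp_le_exp.2 h1
      have h2 := Real.exp_one_gt_d9
      linarith
    have hE : (0:ℝ) < Real.exp (-t^2/2) := Real.exp_pos _
    have key : 1 ≤ (Real.sqrt (2*π))⁻¹ * Real.exp ((t - 0.25)/2) := by
      rw [← div_eq_inv_mul, le_div_iff₀ hS0]
      nlinarith
    nlinarith [mul_le_mul_of_nonneg_right key hE.le]
  rw [hvol, mul_one] at hconst
  linarith


/-- The standard normal quantile function Φ⁻¹ : (0,1) → ℝ (an inverse of Φ). -/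
noncomputable def stdNormalQuantile : ℝ → ℝ := Function.invFun stdNormalCDF

/-- for every `η ∈ [0.99, 1)`, `Φ⁻¹(η) = √(2 log(1/(1−η))) − r(η)` with the
remainder `r(η) = √(2 log(1/(1−η))) − Φ⁻¹(η)` in `[0, 1.5]`; equivalently,
`√(2 log(1/(1−η))) − 1.5 ≤ Φ⁻¹(η) ≤ √(2 log(1/(1−η)))`. -/
theorem stmt7 : ∀ η : ℝ, 0.99 ≤ η → η < 1 →
    Real.sqrt (2 * Real.log (1 / (1 - η))) - 1.5 ≤ stdNormalQuantile η ∧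
    stdNormalQuantile η ≤ Real.sqrt (2 * Real.log (1 / (1 - η))) := by
  intro η hη1 hη2
  have hε0 : 0 < 1 - η := by linarith
  have hε1 : 1 - η ≤ 0.01 := by linarith
  set L := Real.log (1 / (1 - η)) with hLdef
  set t := Real.sqrt (2 * L) with htdef
  have hL4 : 4 ≤ L := by
    rw [hLdef, Real.le_log_iff_exp_le (by positivity)]
    have h1 : Real.exp 4 < 2.7182818286 ^ 4 := by
      have := Real.exp_one_lt_d9
      calc Real.exp 4 = Real.exp 1 ^ 4 := by
            rw [← Real.exp_nat_mul]; norm_num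
        _ < 2.7182818286 ^ 4 := by
            apply pow_lt_pow_left₀ this (Real.exp_pos 1).le
            norm_num
    have h2 : (100:ℝ) ≤ 1 / (1 - η) := by
      rw [le_div_iff₀ hε0]; linarith
    nlinarith
  have hL0 : (0:ℝ) ≤ 2 * L := by linarith
  have hsq : t ^ 2 = 2 * L := Real.sq_sqrt hL0
  have ht225 : 2.25 ≤ t := by
    rw [htdef, show (2.25:ℝ) = Real.sqrt (2.25 ^ 2) by
      rw [Real.sqrt_sq]; norm_num]
    exact Real.sqrt_le_sqrt (by nlinarith)
  have hexpε : Real.exp (-t ^ 2 / 2) = 1 - η := by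
    rw [hsq, show -(2 * L) / 2 = -L by ring, hLdef, one_div, Real.log_inv, neg_neg,
      Real.exp_log hε0]
  obtain ⟨x, hx⟩ := exists_cdf_eq (by linarith : (0:ℝ) < η) hη2
  have hq : stdNormalCDF (stdNormalQuantile η) = η :=
    Function.invFun_eq ⟨x, hx⟩
  constructor
  · -- lower bound
    have h1 : Real.exp (-t ^ 2 / 2) ≤ 1 - stdNormalCDF (t - 1.5) := tail_lb ht225
    have h2 : stdNormalCDF (t - 1.5) ≤ stdNormalCDF (stdNormalQuantile η) := by
      rw [hq]; rw [hexpε] at h1; linarith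
    exact cdf_mono.le_iff_le.mp h2
  · -- upper bound
    have h1 : 1 - stdNormalCDF t ≤ Real.exp (-t ^ 2 / 2) := tail_ub (by linarith)
    have h2 : stdNormalCDF (stdNormalQuantile η) ≤ stdNormalCDF t := by
      rw [hq]; rw [hexpε] at h1; linarith
    exact cdf_mono.le_iff_le.mp h2
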